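/- arXiv:2308.01366 — 2 statements merged into one kernel-verified Lean document; each statement's English description precedes it below -/
import Mathlib

section
/- Let x, y ∈ ℝⁿ \ {0}, u a unit vector, with |y − x| ≤ ξ, |x| ≥ t^{2-ε}, and with both angles of x and y with u being O(t^{-ε/2}). Then |x|·(cos∠(y,u) − cos∠(x,u)) = O(t^{-ε/2}) as t → ∞. -/
/-!
Pass to the unit vectors `x̂ = x / ‖x‖` and `ŷ = y / ‖y‖`, so that the cosines are `⟪x̂, u⟫` and
`⟪ŷ, u⟫`, and `‖ŷ - x̂‖ ≤ 2 ‖y - x‖ / ‖x‖`. Split `u = ⟪x̂, u⟫ x̂ + r` with `r ⊥ x̂` and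
`‖r‖ = sin ∠(x, u)`. Since `x̂, ŷ` are unit vectors, `⟪ŷ - x̂, x̂⟫ = -‖ŷ - x̂‖² / 2` is of second
order, so `‖x‖ |⟪ŷ - x̂, u⟫| ≲ ‖y - x‖² / ‖x‖ + ‖y - x‖ ∠(x, u)`,
which is `O(t^{-ε/2})` because `‖x‖ ≥ t^{2-ε} ≥ t^{ε/2}` for `ε < 1`.
-/

open InnerProductGeometry RealInnerProductSpace

namespace InnerProductGeometry

variable {V : Type*} [NormedAddCommGroup V] [InnerProductSpace ℝ V]

theorem norm_mul_norm_normalize_sub_normalize_le (x y : V) :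
    ‖x‖ * ‖NormedSpace.normalize y - NormedSpace.normalize x‖ ≤ 2 * ‖y - x‖ := by
  have hsplit : ‖x‖ • (NormedSpace.normalize y - NormedSpace.normalize x) =
      (y - x) + (‖x‖ - ‖y‖) • NormedSpace.normalize y := by
    rw [smul_sub, NormedSpace.norm_smul_normalize, sub_smul, NormedSpace.norm_smul_normalize]
    abel
  have hunit : ‖NormedSpace.normalize y‖ ≤ 1 := by
    rcases eq_or_ne y 0 with rfl | hy
    · simp
    · exact (NormedSpace.norm_normalize hy).le
  have hradial : ‖(‖x‖ - ‖y‖) • NormedSpace.normalize y‖ ≤ ‖y - x‖ := by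
    rw [norm_smul, Real.norm_eq_abs, norm_sub_rev y x]
    exact (mul_le_of_le_one_right (abs_nonneg _) hunit).trans (abs_norm_sub_norm_le x y)
  calc ‖x‖ * ‖NormedSpace.normalize y - NormedSpace.normalize x‖
      = ‖‖x‖ • (NormedSpace.normalize y - NormedSpace.normalize x)‖ := by
        rw [norm_smul, norm_norm]
    _ ≤ ‖y - x‖ + ‖(‖x‖ - ‖y‖) • NormedSpace.normalize y‖ := hsplit ▸ norm_add_le _ _
    _ ≤ 2 * ‖y - x‖ := by linarith

theorem norm_sub_inner_smul_eq_sin_angle {u v : V} (hu : ‖u‖ = 1) (hv : ‖v‖ = 1) :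
    ‖u - ⟪v, u⟫ • v‖ = Real.sin (angle v u) := by
  rw [← sq_eq_sq₀ (norm_nonneg _) (sin_angle_nonneg v u), Real.sin_sq,
    ← inner_eq_cos_angle_of_norm_eq_one hv hu, norm_sub_sq_real, norm_smul, real_inner_smul_right,
    Real.norm_eq_abs, mul_pow, sq_abs, hu, hv, real_inner_comm u v]
  ring

theorem abs_inner_sub_inner_le_of_norm_eq_one {u v w : V} (hu : ‖u‖ = 1) (hv : ‖v‖ = 1)
    (hw : ‖w‖ = 1) :
    |⟪w, u⟫ - ⟪v, u⟫| ≤ ‖w - v‖ ^ 2 / 2 + ‖w - v‖ * Real.sin (angle v u) := by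
  have hdecomp : ⟪w, u⟫ - ⟪v, u⟫ = ⟪v, u⟫ * ⟪w - v, v⟫ + ⟪w - v, u - ⟪v, u⟫ • v⟫ := by
    simp only [inner_sub_left, inner_sub_right, real_inner_smul_right]; ring
  have hradial : ⟪w - v, v⟫ = -(‖w - v‖ ^ 2 / 2) := by
    rw [norm_sub_sq_real, inner_sub_left, real_inner_self_eq_norm_sq, hv, hw]; ring
  have hcos : |⟪v, u⟫| ≤ 1 := by
    simpa [hu, hv] using abs_real_inner_le_norm v u
  rw [hdecomp, ← norm_sub_inner_smul_eq_sin_angle hu hv]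
  calc |⟪v, u⟫ * ⟪w - v, v⟫ + ⟪w - v, u - ⟪v, u⟫ • v⟫|
      ≤ |⟪v, u⟫| * |⟪w - v, v⟫| + |⟪w - v, u - ⟪v, u⟫ • v⟫| := by
        rw [← abs_mul]; exact abs_add_le _ _
    _ ≤ 1 * (‖w - v‖ ^ 2 / 2) + ‖w - v‖ * ‖u - ⟪v, u⟫ • v‖ := by
        gcongr
        · rw [hradial, abs_neg, abs_of_nonneg (by positivity)]
        · exact abs_real_inner_le_norm _ _
    _ = _ := by rw [one_mul]

theorem norm_mul_abs_cos_angle_sub_cos_angle_le {x y u : V} (hx : x ≠ 0) (hy : y ≠ 0)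
    (hu : ‖u‖ = 1) :
    ‖x‖ * |Real.cos (angle y u) - Real.cos (angle x u)| ≤
      2 * ‖y - x‖ ^ 2 / ‖x‖ + 2 * ‖y - x‖ * angle x u := by
  have hcos {z : V} (hz : z ≠ 0) : Real.cos (angle z u) = ⟪NormedSpace.normalize z, u⟫ := by
    rw [inner_eq_cos_angle_of_norm_eq_one (NormedSpace.norm_normalize hz) hu,
      angle_normalize_left]
  have hpx : 0 < ‖x‖ := norm_pos_iff.mpr hx
  set δ := ‖NormedSpace.normalize y - NormedSpace.normalize x‖
  have hδ : ‖x‖ * δ ≤ 2 * ‖y - x‖ := norm_mul_norm_normalize_sub_normalize_le x y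
  have hsin : Real.sin (angle x u) ≤ angle x u := Real.sin_le (angle_nonneg x u)
  calc ‖x‖ * |Real.cos (angle y u) - Real.cos (angle x u)|
      ≤ ‖x‖ * (δ ^ 2 / 2 + δ * Real.sin (angle x u)) := by
        rw [hcos hx, hcos hy, ← angle_normalize_left x u]
        gcongr
        exact abs_inner_sub_inner_le_of_norm_eq_one hu (NormedSpace.norm_normalize hx)
          (NormedSpace.norm_normalize hy)
    _ = (‖x‖ * δ) ^ 2 / (2 * ‖x‖) + ‖x‖ * δ * Real.sin (angle x u) := by
        field_simp
    _ ≤ (2 * ‖y - x‖) ^ 2 / (2 * ‖x‖) + 2 * ‖y - x‖ * angle x u := by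
        gcongr
        exact sin_angle_nonneg x u
    _ = 2 * ‖y - x‖ ^ 2 / ‖x‖ + 2 * ‖y - x‖ * angle x u := by
        field_simp

end InnerProductGeometry

theorem cosine_difference_estimate_general (n : ℕ) (ξ ε c : ℝ) (hξ : 0 < ξ)
    (hε1 : ε < 1) (hc : 0 < c) (u : EuclideanSpace ℝ (Fin n)) (hu : ‖u‖ = 1) :
    ∃ C T : ℝ, 0 < C ∧ ∀ t : ℝ, T ≤ t → ∀ x y : EuclideanSpace ℝ (Fin n),
      x ≠ 0 → y ≠ 0 → ‖y - x‖ ≤ ξ → t ^ (2 - ε) ≤ ‖x‖ →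
      InnerProductGeometry.angle x u ≤ c * t ^ (-(ε / 2)) →
      InnerProductGeometry.angle y u ≤ c * t ^ (-(ε / 2)) →
      |‖x‖ * (Real.cos (InnerProductGeometry.angle y u) -
        Real.cos (InnerProductGeometry.angle x u))| ≤ C * t ^ (-(ε / 2)) := by
  refine ⟨2 * ξ * (ξ + c), 1, by positivity, fun t ht x y hx hy hyx hxt hax _ => ?_⟩
  have hx_inv : ‖x‖⁻¹ ≤ t ^ (-(ε / 2)) := by
    have hts : t ^ (ε / 2) ≤ ‖x‖ :=
      (Real.rpow_le_rpow_of_exponent_le ht (by linarith)).trans hxt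
    rw [Real.rpow_neg (by linarith : (0 : ℝ) ≤ t)]
    exact inv_anti₀ (by positivity) hts
  have hd : ‖y - x‖ ^ 2 ≤ ξ ^ 2 := pow_le_pow_left₀ (norm_nonneg _) hyx 2
  calc |‖x‖ * (Real.cos (angle y u) - Real.cos (angle x u))|
      = ‖x‖ * |Real.cos (angle y u) - Real.cos (angle x u)| := by
        rw [abs_mul, abs_norm]
    _ ≤ 2 * ‖y - x‖ ^ 2 / ‖x‖ + 2 * ‖y - x‖ * angle x u :=
        norm_mul_abs_cos_angle_sub_cos_angle_le hx hy hu
    _ ≤ 2 * ξ ^ 2 * t ^ (-(ε / 2)) + 2 * ξ * (c * t ^ (-(ε / 2))) := by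
        rw [div_eq_mul_inv]
        gcongr
        exact angle_nonneg x u
    _ = 2 * ξ * (ξ + c) * t ^ (-(ε / 2)) := by ring

/-- Key cosine-difference estimate: under small-angle conditions,
    ‖x‖·(cos∠(y,u) - cos∠(x,u)) = O(t^{-ε/2}). -/
theorem cosine_difference_estimate (n : ℕ) (ξ ε c : ℝ) (hξ : 0 < ξ) (hε : 0 < ε)
    (hε1 : ε < 1) (hc : 0 < c) (u : EuclideanSpace ℝ (Fin n)) (hu : ‖u‖ = 1) :
    ∃ C T : ℝ, 0 < C ∧ ∀ t : ℝ, T ≤ t → ∀ x y : EuclideanSpace ℝ (Fin n),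
      x ≠ 0 → y ≠ 0 → ‖y - x‖ ≤ ξ → t ^ (2 - ε) ≤ ‖x‖ →
      InnerProductGeometry.angle x u ≤ c * t ^ (-(ε / 2)) →
      InnerProductGeometry.angle y u ≤ c * t ^ (-(ε / 2)) →
      |‖x‖ * (Real.cos (InnerProductGeometry.angle y u) -
        Real.cos (InnerProductGeometry.angle x u))| ≤ C * t ^ (-(ε / 2)) :=
  cosine_difference_estimate_general n ξ ε c hξ hε1 hc u hu
end

section
/- Let x, y ∈ ℝⁿ \ {0}, u a unit vector, |y − x| ≤ ξ, |x| ≥ t^{2-ε}, and suppose the angle of x with u is O(t^{-ε/2}) in the sense cos∠(x,u) = 1 + O(t^{-ε}). Then ⟨u, x⟩ − ⟨u, y⟩ = |x| − |y| + O(t^{-ε/2}) as t → ∞. -/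
/-!
Put `v = ‖x‖⁻¹ • x`. Since `⟪v, x⟫ = ‖x‖`, the error term splits as
`⟪u - v, x - y⟫ + (‖x‖ ‖y‖ - ⟪x, y⟫) / ‖x‖`. The first summand is at most `‖u - v‖ ξ`, and
`‖u - v‖² = 2 (1 - cos ∠(x, u)) = O(t^{-ε})`. The second lies in `[0, ‖x - y‖² / (2 ‖x‖)]`,
which is `O(t^{-(2-ε)}) ⊆ O(t^{-ε/2})`.
-/

open RealInnerProductSpace InnerProductGeometry

section InnerProductSpace

variable {E : Type*} [NormedAddCommGroup E] [InnerProductSpace ℝ E]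

theorem norm_sub_inv_norm_smul_sq {u x : E} (hu : ‖u‖ = 1) (hx : x ≠ 0) :
    ‖u - ‖x‖⁻¹ • x‖ ^ 2 = 2 * (1 - Real.cos (angle x u)) := by
  have hv : ‖‖x‖⁻¹ • x‖ = 1 := norm_smul_inv_norm hx
  rw [sq, norm_sub_sq_eq_norm_sq_add_norm_sq_sub_two_mul_norm_mul_norm_mul_cos_angle, hu, hv,
    angle_smul_right_of_pos _ _ (inv_pos.2 (norm_pos_iff.2 hx)), angle_comm]
  ring

theorem norm_mul_norm_sub_inner_le (x y : E) : ‖x‖ * ‖y‖ - ⟪x, y⟫ ≤ ‖x - y‖ ^ 2 / 2 := by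
  rw [norm_sub_sq_real]
  nlinarith [sq_nonneg (‖x‖ - ‖y‖)]

theorem inner_sub_inner_sub_eq {x : E} (u y : E) (hx : x ≠ 0) :
    ⟪u, x⟫ - ⟪u, y⟫ - (‖x‖ - ‖y‖) =
      ⟪u - ‖x‖⁻¹ • x, x - y⟫ + (‖x‖ * ‖y‖ - ⟪x, y⟫) / ‖x‖ := by
  have hx' : ‖x‖ ≠ 0 := norm_ne_zero_iff.2 hx
  rw [inner_sub_left, inner_sub_right, inner_sub_right, real_inner_smul_left,
    real_inner_smul_left, real_inner_self_eq_norm_sq]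
  field_simp
  ring

theorem abs_inner_sub_inner_sub_le {x : E} (u y : E) (hx : x ≠ 0) :
    |⟪u, x⟫ - ⟪u, y⟫ - (‖x‖ - ‖y‖)| ≤
      ‖u - ‖x‖⁻¹ • x‖ * ‖x - y‖ + ‖x - y‖ ^ 2 / 2 / ‖x‖ := by
  have hx' : 0 < ‖x‖ := norm_pos_iff.2 hx
  have hdefect : 0 ≤ ‖x‖ * ‖y‖ - ⟪x, y⟫ := sub_nonneg.2 (real_inner_le_norm x y)
  rw [inner_sub_inner_sub_eq u y hx]
  refine (abs_add_le _ _).trans (add_le_add (abs_real_inner_le_norm _ _) ?_)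
  rw [abs_of_nonneg (by positivity)]
  gcongr
  exact norm_mul_norm_sub_inner_le x y

end InnerProductSpace

theorem inner_difference_estimate_general (n : ℕ) (ξ ε c : ℝ) (hξ : 0 < ξ)
    (hε1 : ε < 1) (u : EuclideanSpace ℝ (Fin n)) (hu : ‖u‖ = 1) :
    ∃ C T : ℝ, 0 < C ∧ ∀ t : ℝ, T ≤ t → ∀ x y : EuclideanSpace ℝ (Fin n),
      x ≠ 0 → y ≠ 0 → ‖y - x‖ ≤ ξ → t ^ (2 - ε) ≤ ‖x‖ →
      |Real.cos (InnerProductGeometry.angle x u) - 1| ≤ c * t ^ (-ε) →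
      |(⟪u, x⟫ - ⟪u, y⟫) - (‖x‖ - ‖y‖)| ≤ C * t ^ (-(ε / 2)) := by
  refine ⟨ξ * (√(2 * c) + ξ / 2), 1, by positivity, ?_⟩
  intro t ht x y hx _ hyx hxt hcos
  have ht0 : 0 < t := one_pos.trans_le ht
  have hxy : ‖x - y‖ ≤ ξ := norm_sub_rev x y ▸ hyx
  have hdir : ‖u - ‖x‖⁻¹ • x‖ ≤ √(2 * c) * t ^ (-(ε / 2)) := by
    have hsq : ‖u - ‖x‖⁻¹ • x‖ ^ 2 ≤ 2 * c * t ^ (-ε) := by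
      rw [norm_sub_inv_norm_smul_sq hu hx]
      linarith [neg_abs_le (Real.cos (angle x u) - 1)]
    calc ‖u - ‖x‖⁻¹ • x‖ ≤ √(2 * c * t ^ (-ε)) := Real.le_sqrt_of_sq_le hsq
      _ = √(2 * c) * t ^ (-(ε / 2)) := by
        rw [Real.sqrt_mul' _ (by positivity), Real.sqrt_eq_rpow (t ^ (-ε)), ← Real.rpow_mul ht0.le]
        ring_nf
  have hinv : ‖x‖⁻¹ ≤ t ^ (-(ε / 2)) :=
    calc ‖x‖⁻¹ ≤ (t ^ (2 - ε))⁻¹ := inv_anti₀ (by positivity) hxt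
      _ = t ^ (-(2 - ε)) := (Real.rpow_neg ht0.le _).symm
      _ ≤ t ^ (-(ε / 2)) := Real.rpow_le_rpow_of_exponent_le ht (by linarith)
  calc |(⟪u, x⟫ - ⟪u, y⟫) - (‖x‖ - ‖y‖)|
      ≤ ‖u - ‖x‖⁻¹ • x‖ * ‖x - y‖ + ‖x - y‖ ^ 2 / 2 / ‖x‖ := abs_inner_sub_inner_sub_le u y hx
    _ ≤ √(2 * c) * t ^ (-(ε / 2)) * ξ + ξ ^ 2 / 2 * t ^ (-(ε / 2)) := by
      rw [div_eq_mul_inv _ ‖x‖]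
      gcongr
    _ = ξ * (√(2 * c) + ξ / 2) * t ^ (-(ε / 2)) := by ring

/-- Inner-product difference estimate: if cos∠(x,u) = 1 + O(t^{-ε}) then
    ⟨u,x⟩ - ⟨u,y⟩ = ‖x‖ - ‖y‖ + O(t^{-ε/2}). -/
theorem inner_difference_estimate (n : ℕ) (ξ ε c : ℝ) (hξ : 0 < ξ) (hε : 0 < ε)
    (hε1 : ε < 1) (hc : 0 < c) (u : EuclideanSpace ℝ (Fin n)) (hu : ‖u‖ = 1) :
    ∃ C T : ℝ, 0 < C ∧ ∀ t : ℝ, T ≤ t → ∀ x y : EuclideanSpace ℝ (Fin n),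
      x ≠ 0 → y ≠ 0 → ‖y - x‖ ≤ ξ → t ^ (2 - ε) ≤ ‖x‖ →
      |Real.cos (InnerProductGeometry.angle x u) - 1| ≤ c * t ^ (-ε) →
      |(⟪u, x⟫ - ⟪u, y⟫) - (‖x‖ - ‖y‖)| ≤ C * t ^ (-(ε / 2)) :=
  inner_difference_estimate_general n ξ ε c hξ hε1 u hu
end
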